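/- arXiv:2203.06466 — 2 statements merged into one kernel-verified Lean document; each statement's English description precedes it below -/
import Mathlib

section
/- Let G be a graph and v a vertex of degree at most 2 in G. If G - v has an (F2, F)-partition, then G has an (F2, F)-partition. -/
open SimpleGraph

/-- `G` contains no cycle of length `n`. -/
def NoCycleLen {V : Type} (G : SimpleGraph V) (n : ℕ) : Prop :=
  ∀ (v : V) (w : G.Walk v v), w.IsCycle → w.length ≠ n

/-- `(V1, V2)` partitions the vertex subset `s`, with `G[V1]` a forest of maximum
degree at most 2 and `G[V2]` a forest. -/
def IsF2FPartOn {V : Type} (G : SimpleGraph V) (s V1 V2 : Set V) : Prop :=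
  V1 ∪ V2 = s ∧ Disjoint V1 V2 ∧
  (G.induce V1).IsAcyclic ∧
  (∀ x : V1, ((G.induce V1).neighborSet x).ncard ≤ 2) ∧
  (G.induce V2).IsAcyclic

/-! Put `v` into the forest part `V2` when it has at most one neighbour there: a vertex joined to
a forest by at most one edge closes no cycle. Otherwise both neighbours of `v` lie in `V2`, so
`v` is isolated from `V1` and can join `V1` without creating a cycle or raising a degree. -/

namespace Set

lemma disjoint_of_ncard_le_two_of_inter_nontrivial {α : Type*} {N A B : Set α} (hfin : N.Finite)
    (hN : N.ncard ≤ 2) (hAB : Disjoint A B) (hB : (N ∩ B).Nontrivial) : Disjoint N A := by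
  have hB2 : 1 < (N ∩ B).ncard :=
    one_lt_ncard_iff_nontrivial_and_finite.mpr ⟨hB, hfin.inter_of_left B⟩
  have hsum : (N ∩ A).ncard + (N ∩ B).ncard ≤ N.ncard := by
    rw [← ncard_union_eq ((hAB.inter_left' N).inter_right' N) (hfin.inter_of_left A)
      (hfin.inter_of_left B), ← inter_union_distrib_left]
    exact ncard_le_ncard inter_subset_left hfin
  rw [disjoint_iff_inter_eq_empty, ← ncard_eq_zero (hfin.inter_of_left A)]
  omega

end Set

namespace SimpleGraph

variable {V W : Type*} {G : SimpleGraph V} {H : SimpleGraph W}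

lemma Iso.ncard_neighborSet (f : G ≃g H) (x : V) :
    (H.neighborSet (f x)).ncard = (G.neighborSet x).ncard := by
  rw [← Nat.card_coe_set_eq, ← Nat.card_coe_set_eq]
  exact Nat.card_congr (f.mapNeighborSet x).symm

lemma ncard_neighborSet_induce (s : Set V) (x : s) :
    ((G.induce s).neighborSet x).ncard = (G.neighborSet x ∩ s).ncard := by
  rw [neighborSet_induce, ← Set.ncard_image_of_injective _ Subtype.val_injective,
    Subtype.image_preimage_coe, Set.inter_comm]

noncomputable def induceInduceIso (s : Set V) (A : Set s) :
    (G.induce s).induce A ≃g G.induce (Subtype.val '' A) where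
  toEquiv := Equiv.Set.image Subtype.val A Subtype.val_injective
  map_rel_iff' := Iff.rfl

lemma isAcyclic_induce_insert {B : Set V} {v : V} (hB : (G.induce B).IsAcyclic)
    (hv : (G.neighborSet v ∩ B).Subsingleton) : (G.induce (insert v B)).IsAcyclic := by
  classical
  intro a c hc
  by_cases hvc : ⟨v, Set.mem_insert v B⟩ ∈ c.support
  · set c' := c.rotate _ hvc
    have hc' : c'.IsCycle := hc.rotate hvc
    have hsnd : G.Adj v c'.snd := c'.adj_snd hc'.not_nil
    have hpen : G.Adj v c'.penultimate := (c'.adj_penultimate hc'.not_nil).symm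
    exact hc'.snd_ne_penultimate <| Subtype.ext <|
      hv ⟨hsnd, c'.snd.2.resolve_left hsnd.ne'⟩ ⟨hpen, c'.penultimate.2.resolve_left hpen.ne'⟩
  · set w := c.map (Embedding.induce (insert v B)).toHom
    have hw : ∀ x ∈ w.support, x ∈ B := by
      simp only [w, Walk.support_map, List.mem_map]
      rintro _ ⟨x, hx, rfl⟩
      refine x.2.resolve_left fun h => hvc ?_
      rwa [← show x = ⟨v, Set.mem_insert v B⟩ from Subtype.ext h]
    have hwc : w.IsCycle :=
      (Walk.isCycle_map_iff_of_injective (Embedding.induce (G := G) _).injective).mpr hc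
    refine hB (w.induce B hw)
      ((Walk.isCycle_map_iff_of_injective (f := (Embedding.induce (G := G) B).toHom)
        (Embedding.induce (G := G) B).injective).mp ?_)
    rwa [Walk.map_induce]

lemma ncard_neighborSet_induce_insert_le {A : Set V} {v : V} {k : ℕ}
    (hv : Disjoint (G.neighborSet v) A) (hA : ∀ x : A, ((G.induce A).neighborSet x).ncard ≤ k)
    (x : ↥(insert v A)) : ((G.induce (insert v A)).neighborSet x).ncard ≤ k := by
  obtain ⟨x, hx⟩ := x
  rw [ncard_neighborSet_induce]
  change (G.neighborSet x ∩ insert v A).ncard ≤ k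
  rcases hx with rfl | hx
  · rw [Set.inter_insert_of_notMem (show x ∉ G.neighborSet x from G.irrefl), hv.inter_eq,
      Set.ncard_empty]
    exact Nat.zero_le k
  · have hxv : v ∉ G.neighborSet x := fun h => hv.notMem_of_mem_right hx h.symm
    rw [Set.inter_insert_of_notMem hxv]
    simpa only [ncard_neighborSet_induce] using hA ⟨x, hx⟩

end SimpleGraph

variable {V : Type} {G : SimpleGraph V} {s V1 V2 : Set V} {v : V}

lemma IsF2FPartOn.image_val {V1 V2 : Set s} (h : IsF2FPartOn (G.induce s) Set.univ V1 V2) :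
    IsF2FPartOn G s (Subtype.val '' V1) (Subtype.val '' V2) := by
  obtain ⟨hU, hD, hA1, hdeg1, hA2⟩ := h
  refine ⟨?_, (Set.disjoint_image_iff Subtype.val_injective).mpr hD,
    (induceInduceIso s V1).isAcyclic_iff.mp hA1, fun x => ?_,
    (induceInduceIso s V2).isAcyclic_iff.mp hA2⟩
  · rw [← Set.image_union, hU, Set.image_univ, Subtype.range_coe]
  · obtain ⟨y, hy⟩ := (induceInduceIso s V1).surjective x
    rw [← hy, Iso.ncard_neighborSet]
    exact hdeg1 y

lemma IsF2FPartOn.insert_right (h : IsF2FPartOn G s V1 V2) (hvs : v ∉ s)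
    (hv : (G.neighborSet v ∩ V2).Subsingleton) : IsF2FPartOn G (insert v s) V1 (insert v V2) := by
  obtain ⟨hU, hD, hA1, hdeg1, hA2⟩ := h
  refine ⟨by rw [Set.union_insert, hU], Set.disjoint_insert_right.mpr ⟨?_, hD⟩, hA1, hdeg1,
    isAcyclic_induce_insert hA2 hv⟩
  exact fun hv1 => hvs (hU ▸ Or.inl hv1)

lemma IsF2FPartOn.insert_left (h : IsF2FPartOn G s V1 V2) (hvs : v ∉ s)
    (hv : Disjoint (G.neighborSet v) V1) : IsF2FPartOn G (insert v s) (insert v V1) V2 := by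
  obtain ⟨hU, hD, hA1, hdeg1, hA2⟩ := h
  refine ⟨by rw [Set.insert_union, hU], Set.disjoint_insert_left.mpr ⟨?_, hD⟩,
    isAcyclic_induce_insert hA1 (hv.inter_eq ▸ Set.subsingleton_empty),
    ncard_neighborSet_induce_insert_le hv hdeg1, hA2⟩
  exact fun hv2 => hvs (hU ▸ Or.inr hv2)

theorem delete_low_degree_vertex_extend_general {V : Type} [Fintype V]
    (G : SimpleGraph V) [DecidableRel G.Adj] (v : V) (hdeg : G.degree v ≤ 2)
    (h : ∃ V1 V2 : Set ↥({v}ᶜ : Set V),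
      IsF2FPartOn (G.induce ({v}ᶜ : Set V)) Set.univ V1 V2) :
    ∃ V1 V2 : Set V, IsF2FPartOn G Set.univ V1 V2 := by
  obtain ⟨V1, V2, hP⟩ := h
  have hP' := hP.image_val
  have hvs : v ∉ ({v}ᶜ : Set V) := fun h => h rfl
  rw [← show insert v ({v}ᶜ : Set V) = Set.univ by rw [Set.insert_eq, Set.union_compl_self]]
  by_cases hv : (G.neighborSet v ∩ Subtype.val '' V2).Subsingleton
  · exact ⟨_, _, hP'.insert_right hvs hv⟩
  · have hN : (G.neighborSet v).ncard ≤ 2 := by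
      rwa [Set.ncard_eq_toFinset_card', ← neighborFinset_def, card_neighborFinset_eq_degree]
    exact ⟨_, _, hP'.insert_left hvs (Set.disjoint_of_ncard_le_two_of_inter_nontrivial
      (Set.toFinite _) hN hP'.2.1 (Set.not_subsingleton_iff.mp hv))⟩

theorem delete_low_degree_vertex_extend {V : Type} [Fintype V] [DecidableEq V]
    (G : SimpleGraph V) [DecidableRel G.Adj] (v : V) (hdeg : G.degree v ≤ 2)
    (h : ∃ V1 V2 : Set ↥({v}ᶜ : Set V),
      IsF2FPartOn (G.induce ({v}ᶜ : Set V)) Set.univ V1 V2) :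
    ∃ V1 V2 : Set V, IsF2FPartOn G Set.univ V1 V2 :=
  delete_low_degree_vertex_extend_general G v hdeg h
end

section
/- In a simple 2-connected plane graph with no 4-cycles and no 6-cycles, every face of length 7 is incident to at most six 3-vertices that are incident to a 3-face. -/
open SimpleGraph

/-- A combinatorial plane embedding of `G`: a finite set of faces, each with a closed
boundary walk, satisfying the handshaking identity for faces and Euler's formula. -/
structure PlaneEmbedding {V : Type} [Fintype V] [DecidableEq V]
    (G : SimpleGraph V) [DecidableRel G.Adj] : Type 1 where
  Face : Type
  faceFintype : Fintype Face
  boundary : Face → List V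
  boundary_ne : ∀ f, boundary f ≠ []
  boundary_walk : ∀ f, (boundary f ++ (boundary f).take 1).Chain' G.Adj
  edge_count : ∑ f ∈ (@Finset.univ Face faceFintype), (boundary f).length
      = 2 * G.edgeFinset.card
  euler : (Fintype.card V : ℤ) - G.edgeFinset.card + (@Fintype.card Face faceFintype) = 2

/-- `G` is planar: it admits a plane embedding. -/
def SimpleGraph.Planar {V : Type} [Fintype V] [DecidableEq V]
    (G : SimpleGraph V) [DecidableRel G.Adj] : Prop :=
  Nonempty (PlaneEmbedding G)

namespace PlaneEmbedding

variable {V : Type} [Fintype V] [DecidableEq V] {G : SimpleGraph V} [DecidableRel G.Adj]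

/-- The length of the boundary walk of a face. -/
def faceLen (E : PlaneEmbedding G) (f : E.Face) : ℕ := (E.boundary f).length

/-- A vertex is incident to a face if it lies on the boundary walk. -/
def IncidentVF (E : PlaneEmbedding G) (v : V) (f : E.Face) : Prop := v ∈ E.boundary f

/-- The edges of the boundary walk of a face (cyclically consecutive pairs). -/
def faceEdges (E : PlaneEmbedding G) (f : E.Face) : List (Sym2 V) :=
  ((E.boundary f).zip ((E.boundary f).rotate 1)).map fun p => s(p.1, p.2)

/-- Two faces are adjacent if they are distinct and share an edge. -/
def FacesAdj (E : PlaneEmbedding G) (f g : E.Face) : Prop :=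
  f ≠ g ∧ ∃ e, e ∈ E.faceEdges f ∧ e ∈ E.faceEdges g

/-- `n_i(v)`: the number of faces of length `i` incident to `v`. -/
noncomputable def nIncident (E : PlaneEmbedding G) (i : ℕ) (v : V) : ℕ :=
  {f : E.Face | E.faceLen f = i ∧ E.IncidentVF v f}.ncard

/-- `m_i(v)`: the number of pendent `i`-faces of `v`, i.e. faces of length `i` not
incident to `v` but incident to a 3-vertex adjacent to `v`. -/
noncomputable def mPendent (E : PlaneEmbedding G) (i : ℕ) (v : V) : ℕ :=
  {f : E.Face | E.faceLen f = i ∧ ¬ E.IncidentVF v f ∧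
    ∃ u, G.Adj v u ∧ G.degree u = 3 ∧ E.IncidentVF u f}.ncard

/-- A terrible 3-vertex of a face `f`: a 3-vertex on `f` with a neighbor of degree
at most 4 not on `f`. -/
def Terrible (E : PlaneEmbedding G) (f : E.Face) (u : V) : Prop :=
  G.degree u = 3 ∧ E.IncidentVF u f ∧
    ∃ w, G.Adj u w ∧ ¬ E.IncidentVF w f ∧ G.degree w ≤ 4

/-- A poor 3-face: a 3-face incident to two terrible 3-vertices. -/
def PoorFace (E : PlaneEmbedding G) (f : E.Face) : Prop :=
  E.faceLen f = 3 ∧ ∃ u₁ u₂, u₁ ≠ u₂ ∧ E.Terrible f u₁ ∧ E.Terrible f u₂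

end PlaneEmbedding

/-- `G` is 2-connected: at least 3 vertices and removing any vertex leaves a
connected graph. -/
def TwoConnected {V : Type} [Fintype V] (G : SimpleGraph V) : Prop :=
  3 ≤ Fintype.card V ∧ ∀ v : V, (G.induce ({v}ᶜ : Set V)).Connected

/-! If all seven boundary vertices of a 7-face were 3-vertices on triangles, they would be
distinct and span a 7-cycle `c₀ c₁ … c₆`. A chord `cᵢ cᵢ₊₂` would close a 6-cycle, so the
triangle through `cᵢ` must contain one of the two cycle edges at `cᵢ`; it cannot be both, since
the two triangles would share the third neighbour of `cᵢ` and close a 4-cycle. Hence the cycle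
edges lying on triangles alternate around the cycle, which is impossible as 7 is odd. -/

theorem List.IsChain.rel_get_add_one {α : Type} {R : α → α → Prop} {l : List α} [NeZero l.length]
    (h : (l ++ l.take 1).IsChain R) (i : Fin l.length) : R (l.get i) (l.get (i + 1)) := by
  have hlen : 0 < l.length := Nat.pos_of_neZero _
  have := h.getElem i (by simp only [List.length_append, List.length_take]; omega)
  rcases (show i.val + 1 ≤ l.length from i.isLt).lt_or_eq with hi | hi
  · simpa [List.getElem_append, hi, Fin.val_add, Nat.mod_eq_of_lt] using this
  · simpa [Fin.val_add, hi] using this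

theorem List.nodup_and_forall_of_length_le_ncard {α : Type} {l : List α} {P : α → Prop}
    (h : l.length ≤ {x | x ∈ l ∧ P x}.ncard) : l.Nodup ∧ ∀ x ∈ l, P x := by
  classical
  have hsub : {x | x ∈ l ∧ P x} ⊆ ↑l.toFinset := fun x hx => List.mem_toFinset.mpr hx.1
  have hle := Set.ncard_le_ncard hsub (Finset.finite_toSet _)
  rw [Set.ncard_coe_finset] at hle
  have hcard : l.toFinset.card = l.length := le_antisymm l.toFinset_card_le (h.trans hle)
  have heq := Set.eq_of_subset_of_ncard_le hsub (by rw [Set.ncard_coe_finset]; omega)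
    (Finset.finite_toSet _)
  refine ⟨Multiset.toFinset_card_eq_card_iff_nodup.mp hcard, fun x hx => ?_⟩
  have hxS : x ∈ {x | x ∈ l ∧ P x} := heq ▸ List.mem_toFinset.mpr hx
  exact hxS.2

open Fin.NatCast in
theorem Fin.not_forall_iff_not_add_one {n : ℕ} [NeZero n] (hn : Odd n) (P : Fin n → Prop) :
    ¬ ∀ i, P i ↔ ¬ P (i + 1) := by
  intro h
  obtain ⟨k, rfl⟩ := hn
  have heven : ∀ j : ℕ, P ((2 * j : ℕ) : Fin (2 * k + 1)) ↔ P 0 := by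
    intro j
    induction j with
    | zero => simp
    | succ j ih =>
      rw [← ih, h (2 * j : ℕ), h ((2 * j : ℕ) + 1)]
      push_cast [Nat.mul_succ]
      rw [add_assoc, one_add_one_eq_two, not_not]
  have hwrap : ((2 * k : ℕ) : Fin (2 * k + 1)) + 1 = 0 := by
    rw [← Nat.cast_succ]; exact Fin.natCast_self _
  have := h ((2 * k : ℕ) : Fin (2 * k + 1))
  rw [heven k, hwrap] at this
  exact iff_not_self this

section

variable {V : Type} {G : SimpleGraph V}

theorem NoCycleLen.not_forall_adj_add_one {n : ℕ} [NeZero n] (h : NoCycleLen G n) (hn : 2 < n)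
    {c : Fin n → V} (hc : Function.Injective c) : ¬ ∀ i, G.Adj (c i) (c (i + 1)) := by
  intro hadj
  obtain ⟨m, rfl⟩ : ∃ m, n = m + 2 := ⟨n - 2, by omega⟩
  let hom : cycleGraph (m + 2) →g G := ⟨c, fun {a b} hab => by
    rcases cycleGraph_adj.mp hab with hab | hab
    · rw [sub_eq_iff_eq_add'] at hab
      exact hab ▸ (hadj b).symm
    · rw [sub_eq_iff_eq_add'] at hab
      exact hab ▸ hadj a⟩
  obtain ⟨v, p, hp, hlen⟩ := (cycleGraph_isContained_iff hn).mp ⟨hom.toCopy hc⟩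
  exact h v p hp hlen

theorem NoCycleLen.not_adj_add_one_add_one {n : ℕ} [NeZero n] (h : NoCycleLen G (n - 1))
    (hn : 4 ≤ n) {c : Fin n → V} (hc : Function.Injective c) (hadj : ∀ i, G.Adj (c i) (c (i + 1)))
    (i : Fin n) : ¬ G.Adj (c i) (c (i + 1 + 1)) := by
  intro hchord
  obtain ⟨m, rfl⟩ : ∃ m, n = m + 4 := ⟨n - 4, by omega⟩
  replace h : NoCycleLen G (m + 3) := h
  -- the chord closes the cycle `c (i + 2), c (i + 3), …, c (i + n) = c i`
  refine h.not_forall_adj_add_one (by omega)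
    (c := fun j : Fin (m + 3) => c (i + 1 + 1 + j.castSucc))
    (hc.comp ((add_right_injective _).comp (Fin.castSucc_injective _))) fun j => ?_
  induction j using Fin.lastCases with
  | last =>
    have hwrap : i + 1 + 1 + (Fin.last (m + 2)).castSucc = i := by
      ext
      simp only [Fin.val_add, Fin.val_castSucc, Fin.val_last, Fin.val_one, Nat.mod_add_mod]
      rw [show i.val + 1 + 1 + (m + 2) = i.val + (m + 4) by omega, Nat.add_mod_right,
        Nat.mod_eq_of_lt i.isLt]
    simpa [hwrap] using hchord
  | cast k =>
    rw [Fin.coeSucc_eq_succ, ← Fin.succ_castSucc, ← Fin.coeSucc_eq_succ, ← add_assoc]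
    exact hadj _

namespace SimpleGraph

theorem exists_third_neighbor_of_degree_eq_three [DecidableEq V] {a b c : V}
    [Fintype (G.neighborSet b)] (hba : G.Adj b a) (hbc : G.Adj b c) (hac : a ≠ c)
    (hdeg : G.degree b = 3) : ∃ t, G.Adj b t ∧ ∀ z, G.Adj b z → z = a ∨ z = c ∨ z = t := by
  have hcard : (((G.neighborFinset b).erase a).erase c).card = 1 := by
    rw [Finset.card_erase_of_mem (by simp [hbc, hac.symm]),
      Finset.card_erase_of_mem (by simp [hba]), card_neighborFinset_eq_degree, hdeg]
  obtain ⟨t, ht⟩ := Finset.card_eq_one.mp hcard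
  have hbt : G.Adj b t := by
    have htmem : t ∈ ((G.neighborFinset b).erase a).erase c := by simp [ht]
    simpa using Finset.mem_of_mem_erase (Finset.mem_of_mem_erase htmem)
  refine ⟨t, hbt, fun z hz => ?_⟩
  by_contra! hne
  have hmem : z ∈ ((G.neighborFinset b).erase a).erase c := by simp [hz, hne.1, hne.2.1]
  simp [ht, hne.2.2] at hmem

theorem commonNeighbors_nonempty_or_of_degree_eq_three [DecidableEq V] {a b c : V}
    [Fintype (G.neighborSet b)] (hab : G.Adj a b) (hbc : G.Adj b c) (hac : a ≠ c)
    (hnac : ¬ G.Adj a c) (hdeg : G.degree b = 3)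
    (htri : ∃ x y, G.Adj b x ∧ G.Adj b y ∧ G.Adj x y) :
    (G.commonNeighbors a b).Nonempty ∨ (G.commonNeighbors b c).Nonempty := by
  obtain ⟨t, hbt, ht⟩ := exists_third_neighbor_of_degree_eq_three hab.symm hbc hac hdeg
  have hside : ∀ s, G.Adj b s → G.Adj s t →
      (G.commonNeighbors a b).Nonempty ∨ (G.commonNeighbors b c).Nonempty := by
    intro s hbs hst
    rcases ht s hbs with rfl | rfl | rfl
    · exact Or.inl ⟨t, hst, hbt⟩
    · exact Or.inr ⟨t, hbt, hst⟩
    · exact absurd hst (G.loopless.irrefl _)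
  obtain ⟨x, y, hbx, hby, hxy⟩ := htri
  have : x = t ∨ y = t := by
    rcases ht x hbx with rfl | rfl | h <;> rcases ht y hby with rfl | rfl | h' <;>
      simp_all [G.adj_comm]
  rcases this with rfl | rfl
  · exact hside y hby hxy.symm
  · exact hside x hbx hxy

theorem not_commonNeighbors_nonempty_and_of_degree_eq_three [DecidableEq V] {a b c : V}
    [Fintype (G.neighborSet b)] (h4 : NoCycleLen G 4) (hab : G.Adj a b) (hbc : G.Adj b c)
    (hac : a ≠ c) (hnac : ¬ G.Adj a c) (hdeg : G.degree b = 3) :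
    ¬ ((G.commonNeighbors a b).Nonempty ∧ (G.commonNeighbors b c).Nonempty) := by
  rintro ⟨⟨u, hu⟩, ⟨w, hw⟩⟩
  rw [mem_commonNeighbors] at hu hw
  obtain ⟨t, -, ht⟩ := exists_third_neighbor_of_degree_eq_three hab.symm hbc hac hdeg
  have hut : u = t := ((ht u hu.2).resolve_left (by rintro rfl; exact G.loopless.irrefl _ hu.1)
    ).resolve_left (by rintro rfl; exact hnac hu.1)
  have hwt : w = t := ((ht w hw.1).resolve_left (by rintro rfl; exact hnac hw.2.symm)
    ).resolve_left (by rintro rfl; exact G.loopless.irrefl _ hw.2)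
  rw [hut] at hu
  rw [hwt] at hw
  refine h4.not_forall_adj_add_one (by norm_num) (c := ![a, t, c, b]) ?_ ?_
  · intro i j hij
    fin_cases i <;> fin_cases j <;> simp_all [hu.1.ne, hw.2.ne', hbc.ne', hab.ne, hu.2.ne']
  · intro i
    fin_cases i <;> simp [hu.1, hw.2.symm, hbc.symm, hab.symm]

theorem false_of_odd_cycle_of_degree_eq_three {n : ℕ} [NeZero n] [DecidableEq V]
    [∀ v, Fintype (G.neighborSet v)] (hodd : Odd n) (hn : 5 ≤ n) (h4 : NoCycleLen G 4)
    (hchord : NoCycleLen G (n - 1)) {c : Fin n → V} (hc : Function.Injective c)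
    (hadj : ∀ i, G.Adj (c i) (c (i + 1))) (hdeg : ∀ i, G.degree (c i) = 3)
    (htri : ∀ i, ∃ x y, G.Adj (c i) x ∧ G.Adj (c i) y ∧ G.Adj x y) : False := by
  refine Fin.not_forall_iff_not_add_one hodd
    (fun i => (G.commonNeighbors (c i) (c (i + 1))).Nonempty) fun i => ?_
  have hne : c i ≠ c (i + 1 + 1) := hc.ne <| by
    rw [ne_eq, add_assoc, left_eq_add, Fin.ext_iff, Fin.val_add]
    simp [Nat.one_mod_eq_one.mpr (by omega : n ≠ 1), Nat.mod_eq_of_lt (by omega : 1 + 1 < n)]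
  have hnadj := hchord.not_adj_add_one_add_one (by omega) hc hadj i
  have hor := commonNeighbors_nonempty_or_of_degree_eq_three (hadj i) (hadj (i + 1)) hne hnadj
    (hdeg (i + 1)) (htri (i + 1))
  have hnand := not_commonNeighbors_nonempty_and_of_degree_eq_three h4 (hadj i) (hadj (i + 1))
    hne hnadj (hdeg (i + 1))
  exact ⟨fun hl hr => hnand ⟨hl, hr⟩, hor.resolve_right⟩

end SimpleGraph

namespace PlaneEmbedding

variable [Fintype V] [DecidableEq V] [DecidableRel G.Adj]

theorem exists_triangle_of_faceLen_eq_three (E : PlaneEmbedding G) {g : E.Face}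
    (hg : E.faceLen g = 3) {w : V} (hw : E.IncidentVF w g) :
    ∃ x y, G.Adj w x ∧ G.Adj w y ∧ G.Adj x y := by
  have hlen : (E.boundary g).length = 3 := hg
  have : NeZero (E.boundary g).length := ⟨by omega⟩
  obtain ⟨i, rfl⟩ := List.get_of_mem hw
  have hadj : ∀ j, G.Adj ((E.boundary g).get j) ((E.boundary g).get (j + 1)) :=
    (E.boundary_walk g).rel_get_add_one
  have hround : i + 1 + 1 + 1 = i := by
    ext
    simp only [Fin.val_add, Fin.val_one', Nat.mod_add_mod, hlen]
    omega
  have hback := hadj (i + 1 + 1)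
  rw [hround] at hback
  exact ⟨_, _, hadj i, hback.symm, hadj (i + 1)⟩

end PlaneEmbedding

end

theorem seven_face_at_most_six_special_vertices_general {V : Type} [Fintype V] [DecidableEq V]
    (G : SimpleGraph V) [DecidableRel G.Adj] (E : PlaneEmbedding G)
    (h4 : NoCycleLen G 4) (h6 : NoCycleLen G 6) :
    ∀ f : E.Face, E.faceLen f = 7 →
      {w : V | E.IncidentVF w f ∧ G.degree w = 3 ∧
        ∃ g : E.Face, E.faceLen g = 3 ∧ E.IncidentVF w g}.ncard ≤ 6 := by
  intro f hf
  by_contra! hlarge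
  have hlen : (E.boundary f).length = 7 := hf
  obtain ⟨hnodup, hspecial⟩ := List.nodup_and_forall_of_length_le_ncard
    (l := E.boundary f) (P := fun w => G.degree w = 3 ∧ ∃ g, E.faceLen g = 3 ∧ E.IncidentVF w g)
    (by rw [hlen]; exact hlarge)
  have : NeZero (E.boundary f).length := ⟨by omega⟩
  refine false_of_odd_cycle_of_degree_eq_three (by rw [hlen]; decide) (by omega) h4
    (by rwa [hlen]) (List.nodup_iff_injective_get.mp hnodup) (E.boundary_walk f).rel_get_add_one
    (fun i => (hspecial _ (List.get_mem _ i)).1) fun i => ?_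
  obtain ⟨g, hg, hwg⟩ := (hspecial _ (List.get_mem _ i)).2
  exact E.exists_triangle_of_faceLen_eq_three hg hwg

theorem seven_face_at_most_six_special_vertices {V : Type} [Fintype V] [DecidableEq V]
    (G : SimpleGraph V) [DecidableRel G.Adj] (E : PlaneEmbedding G)
    (h2conn : TwoConnected G)
    (h4 : NoCycleLen G 4) (h6 : NoCycleLen G 6) :
    ∀ f : E.Face, E.faceLen f = 7 →
      {w : V | E.IncidentVF w f ∧ G.degree w = 3 ∧
        ∃ g : E.Face, E.faceLen g = 3 ∧ E.IncidentVF w g}.ncard ≤ 6 :=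
  seven_face_at_most_six_special_vertices_general G E h4 h6
end
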